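/- If x > 0 and J₀(x) = 0, then J₁(x) ≠ 0; that is, J₁ does not vanish at any positive zero of J₀. -/

import Mathlib

open Real MeasureTheory

noncomputable def J0 (x : ℝ) : ℝ := (1 / π) * ∫ θ in (0:ℝ)..π, Real.cos (x * Real.sin θ)

noncomputable def J1 (x : ℝ) : ℝ := (1 / π) * ∫ θ in (0:ℝ)..π, Real.cos (θ - x * Real.sin θ)

/-!
Writing `y = J₀` and `z = J₁`, differentiation under the integral sign and one integration by
parts give `y' = -z` and `(t z)' = t y`. Hence the energy `E t = (t y)² + (t z)²` satisfies
`E' = 2 t y² ≥ 0` on `[0, ∞)`. Since `E ≥ 0`, a common zero `x > 0` of `y` and `z` forces `E = 0`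
on `[0, x]`, so `y` vanishes on `(0, x]`, contradicting `y 0 = 1` by continuity.
-/

open Set

section Energy

variable {y z : ℝ → ℝ}

def besselEnergy (y z : ℝ → ℝ) (t : ℝ) : ℝ := (t * y t) ^ 2 + (t * z t) ^ 2

theorem hasDerivAt_besselEnergy {t : ℝ} (hy : HasDerivAt y (-z t) t)
    (hz : HasDerivAt (fun s => s * z s) (t * y t) t) :
    HasDerivAt (besselEnergy y z) (2 * t * y t ^ 2) t := by
  have hty : HasDerivAt (fun s => s * y s) (y t + t * -z t) t := by
    simpa only [one_mul] using (hasDerivAt_id' t).fun_mul hy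
  exact ((hty.fun_pow 2).fun_add (hz.fun_pow 2)).congr_deriv (by push_cast; ring)

theorem no_common_pos_zero_of_bessel_system (hy : ∀ t, HasDerivAt y (-z t) t)
    (hz : ∀ t, HasDerivAt (fun s => s * z s) (t * y t) t) (hy₀ : y 0 ≠ 0) {x : ℝ} (hx : 0 < x)
    (hyx : y x = 0) : z x ≠ 0 := by
  intro hzx
  have hE : ∀ t, HasDerivAt (besselEnergy y z) (2 * t * y t ^ 2) t :=
    fun t => hasDerivAt_besselEnergy (hy t) (hz t)
  have hmono : MonotoneOn (besselEnergy y z) (Ici 0) :=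
    monotoneOn_of_hasDerivWithinAt_nonneg (convex_Ici 0)
      (fun t _ => (hE t).continuousAt.continuousWithinAt)
      (fun t _ => (hE t).hasDerivWithinAt)
      (fun t ht => by rw [interior_Ici, mem_Ioi] at ht; positivity)
  have hvanish : Ioc 0 x ⊆ {t | y t = 0} := by
    intro t ⟨ht₀, htx⟩
    have hle : besselEnergy y z t ≤ 0 := by
      simpa [besselEnergy, hyx, hzx] using hmono ht₀.le hx.le htx
    have : (t * y t) ^ 2 = 0 := by
      unfold besselEnergy at hle
      linarith [sq_nonneg (t * y t), sq_nonneg (t * z t)]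
    simpa [ht₀.ne'] using this
  have hclosed : IsClosed {t | y t = 0} :=
    isClosed_eq (continuous_iff_continuousAt.2 fun t => (hy t).continuousAt) continuous_const
  rw [← hclosed.closure_subset_iff, closure_Ioc hx.ne] at hvanish
  exact hy₀ (hvanish ⟨le_rfl, hx.le⟩)

end Energy

theorem hasDerivAt_intervalIntegral_of_abs_deriv_le {F F' : ℝ → ℝ → ℝ} {a b C x₀ : ℝ}
    (hF : ∀ x, Continuous (F x)) (hF' : Continuous (F' x₀)) (hle : ∀ x θ, |F' x θ| ≤ C)
    (hderiv : ∀ x θ, HasDerivAt (F · θ) (F' x θ) x) :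
    HasDerivAt (fun x => ∫ θ in a..b, F x θ) (∫ θ in a..b, F' x₀ θ) x₀ :=
  (intervalIntegral.hasDerivAt_integral_of_dominated_loc_of_deriv_le (bound := fun _ => C)
    Filter.univ_mem
    (.of_forall fun x => (hF x).aestronglyMeasurable) ((hF x₀).intervalIntegrable _ _)
    hF'.aestronglyMeasurable (.of_forall fun θ _ x _ => hle x θ) intervalIntegrable_const
    (.of_forall fun θ _ x _ => hderiv x θ)).2

theorem integral_cos_mul_comp_sin_eq_zero (g : ℝ → ℝ) :
    ∫ θ in (0:ℝ)..π, cos θ * g (sin θ) = 0 := by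
  -- `θ ↦ π - θ` preserves `[0, π]` and `sin` but negates `cos`
  have h := intervalIntegral.integral_comp_sub_left (fun θ => cos θ * g (sin θ)) (a := 0) (b := π) π
  simp only [cos_pi_sub, sin_pi_sub, neg_mul, intervalIntegral.integral_neg, sub_self,
    sub_zero] at h
  linarith

theorem J1_eq_integral_sin_mul_sin (x : ℝ) :
    J1 x = (1 / π) * ∫ θ in (0:ℝ)..π, sin θ * sin (x * sin θ) := by
  have hsplit : (∫ θ in (0:ℝ)..π, cos (θ - x * sin θ))
      = (∫ θ in (0:ℝ)..π, cos θ * cos (x * sin θ))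
        + ∫ θ in (0:ℝ)..π, sin θ * sin (x * sin θ) := by
    rw [← intervalIntegral.integral_add (by apply Continuous.intervalIntegrable; fun_prop)
      (by apply Continuous.intervalIntegrable; fun_prop)]
    simp only [cos_sub]
  rw [J1, hsplit, integral_cos_mul_comp_sin_eq_zero (fun s => cos (x * s)), zero_add]

theorem J0_zero : J0 0 = 1 := by
  simp [J0, pi_ne_zero]

theorem hasDerivAt_J0 (x : ℝ) : HasDerivAt J0 (-J1 x) x := by
  have h := hasDerivAt_intervalIntegral_of_abs_deriv_le (a := 0) (b := π) (C := 1) (x₀ := x)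
    (F := fun x θ => cos (x * sin θ)) (F' := fun x θ => -(sin θ * sin (x * sin θ)))
    (by fun_prop) (by fun_prop)
    (fun x θ => by
      rw [abs_neg, abs_mul]
      exact mul_le_one₀ (abs_sin_le_one _) (abs_nonneg _) (abs_sin_le_one _))
    (fun x θ => by simpa [mul_comm] using ((hasDerivAt_mul_const (sin θ)).cos (x := x)))
  rw [intervalIntegral.integral_neg] at h
  rw [J1_eq_integral_sin_mul_sin, ← mul_neg]
  exact h.const_mul (1 / π)

theorem hasDerivAt_J1 (x : ℝ) :
    HasDerivAt J1 ((1 / π) * ∫ θ in (0:ℝ)..π, sin θ ^ 2 * cos (x * sin θ)) x := by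
  have h := hasDerivAt_intervalIntegral_of_abs_deriv_le (a := 0) (b := π) (C := 1) (x₀ := x)
    (F := fun x θ => sin θ * sin (x * sin θ)) (F' := fun x θ => sin θ ^ 2 * cos (x * sin θ))
    (by fun_prop) (by fun_prop)
    (fun x θ => by
      rw [abs_mul, abs_pow]
      exact mul_le_one₀ (pow_le_one₀ (abs_nonneg _) (abs_sin_le_one _)) (abs_nonneg _)
        (abs_cos_le_one _))
    (fun x θ => by
      simpa [mul_comm, ← mul_assoc, sq] using
        ((hasDerivAt_mul_const (sin θ)).sin (x := x)).const_mul (sin θ))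
  rw [show J1 = _ from funext J1_eq_integral_sin_mul_sin]
  exact h.const_mul (1 / π)

theorem integral_sin_mul_sin_add_mul_integral_sin_sq_mul_cos (x : ℝ) :
    (∫ θ in (0:ℝ)..π, sin θ * sin (x * sin θ)) + x * ∫ θ in (0:ℝ)..π, sin θ ^ 2 * cos (x * sin θ)
      = x * ∫ θ in (0:ℝ)..π, cos (x * sin θ) := by
  have hint : ∀ f : ℝ → ℝ, Continuous f → IntervalIntegrable f volume 0 π :=
    fun f hf => hf.intervalIntegrable _ _
  have hderiv : ∀ θ ∈ uIcc 0 π, HasDerivAt (fun θ => -(cos θ * sin (x * sin θ)))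
      (sin θ * sin (x * sin θ) + x * (sin θ ^ 2 * cos (x * sin θ)) - x * cos (x * sin θ)) θ := by
    intro θ _
    refine (((hasDerivAt_cos θ).mul ((hasDerivAt_sin θ).const_mul x).sin).neg).congr_deriv ?_
    linear_combination (-x * cos (x * sin θ)) * sin_sq_add_cos_sq θ
  have hzero := intervalIntegral.integral_eq_sub_of_hasDerivAt hderiv (hint _ (by fun_prop))
  rw [intervalIntegral.integral_sub (hint _ (by fun_prop)) (hint _ (by fun_prop)),
    intervalIntegral.integral_add (hint _ (by fun_prop)) (hint _ (by fun_prop)),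
    intervalIntegral.integral_const_mul, intervalIntegral.integral_const_mul] at hzero
  simp only [sin_zero, sin_pi, mul_zero, neg_zero, sub_zero] at hzero
  linarith

theorem hasDerivAt_mul_J1 (x : ℝ) : HasDerivAt (fun t => t * J1 t) (x * J0 x) x := by
  refine ((hasDerivAt_id' x).fun_mul (hasDerivAt_J1 x)).congr_deriv ?_
  rw [J1_eq_integral_sin_mul_sin, J0]
  linear_combination (1 / π) * integral_sin_mul_sin_add_mul_integral_sin_sq_mul_cos x

theorem stmt19 : ∀ x : ℝ, 0 < x → J0 x = 0 → J1 x ≠ 0 := fun _ hx =>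
  no_common_pos_zero_of_bessel_system hasDerivAt_J0 hasDerivAt_mul_J1 (by simp [J0_zero]) hx
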